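/- arXiv:1704.07811 — 6 statements merged into one kernel-verified Lean document; each statement's English description precedes it below -/
import Mathlib

section
/- Let A = J(B,σ,u,μ) be an Albert algebra given by the second Tits construction over k with K = Z(B). Let g ∈ B^* satisfy g·σ(g) = λ ∈ k^*, set ν = N_B(g), and let q ∈ U(B,σ_u) with N_B(q) = ν̄^{-1}ν, where σ_u = Int(u)∘σ. Then the map φ̃ : A → A defined by (a,b) ↦ (g a g^{-1}, λ^{-1} σ(g)^# b q) satisfies N(φ̃(a,b)) = N((a,b)) for all (a,b) ∈ A; together with φ̃(1)=1 this makes φ̃ an automorphism of A extending x ↦ g x g^{-1} on (B,σ)_+. -/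
/-!
From `g σ(g) = λ` we get `σ(g) = λ g⁻¹` and `σ(g)^# = λ⁻¹ ν̄ g`, so the map is
`(a, b) ↦ (g a g⁻¹, c g b q)` with `c = λ⁻² ν̄`. Conjugation by `g` preserves `N_B` and `T_B`;
`N_B (c g b q) = c³ ν N_B(q) N_B(b) = N_B(b)` since `ν ν̄ = λ³`; and, because `q u σ(q) = u`,
the cross term `a' b' u σ(b')` becomes `c c̄ λ · g (a b u σ(b)) g⁻¹`, where `c c̄ λ = λ⁻³ ν ν̄ = 1`.
-/

section

variable {M α : Type*} [Monoid M]

theorem MonoidHom.map_units_conj [CommMonoid α] (N : M →* α) (g : Mˣ) (a : M) :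
    N (g * a * ↑g⁻¹) = N a := by
  rw [map_mul, map_mul, mul_right_comm, ← map_mul, Units.mul_inv, map_one, one_mul]

theorem apply_units_conj_of_comm (T : M → α) (hT : ∀ x y, T (x * y) = T (y * x))
    (g : Mˣ) (a : M) : T (g * a * ↑g⁻¹) = T a := by
  rw [hT, ← mul_assoc, Units.inv_mul, one_mul]

end

section

variable {K B : Type*} [Field K] [Ring B] [Algebra K B]

theorem eq_smul_inv_of_mul_eq_smul_one {g : Bˣ} {s : B} {c : K} (h : (g : B) * s = c • 1) :
    s = c • ((g⁻¹ : Bˣ) : B) := by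
  rw [Units.eq_inv_mul_iff_mul_eq .. |>.2 h, mul_smul_one]

theorem eq_smul_of_mul_eq_smul_one {g s t : B} {c e : K} (hc : c ≠ 0)
    (hgs : g * s = c • 1) (hst : s * t = e • 1) : t = (c⁻¹ * e) • g := by
  have : c • t = e • g := by
    rw [← one_mul t, ← smul_mul_assoc, ← hgs, mul_assoc, hst, mul_smul_one]
  rw [mul_smul, ← this, smul_smul, inv_mul_cancel₀ hc, one_smul]

theorem secondTits_norm_map_eq {bar : K → K} {σ : B → B}
    (hσ_mul : ∀ x y, σ (x * y) = σ y * σ x)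
    (hσ_smul : ∀ (α : K) (x : B), σ (α • x) = bar α • σ x)
    {NB : B → K} (hNB1 : NB 1 = 1) (hNBmul : ∀ x y, NB (x * y) = NB x * NB y)
    (hNBsmul : ∀ (α : K) (x : B), NB (α • x) = α ^ 3 * NB x)
    {TB : B →ₗ[K] K} (hTB_comm : ∀ x y, TB (x * y) = TB (y * x))
    {u : Bˣ} {μ : K} {NA : B × B → K}
    (hNA : ∀ p : B × B,
      NA p = NB p.1 + (μ * NB p.2 + bar (μ * NB p.2)) - TB (p.1 * p.2 * (u : B) * σ p.2))
    {g q : Bˣ} {lam c : K} (hσg : σ g = lam • ((g⁻¹ : Bˣ) : B))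
    (hq : (q : B) * ((u : B) * σ (q : B) * ((u⁻¹ : Bˣ) : B)) = 1)
    (hc : c * bar c * lam = 1) (hcN : c ^ 3 * NB g * NB q = 1) (a b : B) :
    NA (g * a * ((g⁻¹ : Bˣ) : B), c • (g * b * q)) = NA (a, b) := by
  let N : B →* K := ⟨⟨NB, hNB1⟩, hNBmul⟩
  have hfirst : NB (g * a * ((g⁻¹ : Bˣ) : B)) = NB a := N.map_units_conj g a
  have hsecond : NB (c • (g * b * q)) = NB b := by
    rw [hNBsmul, hNBmul, hNBmul]
    linear_combination NB b * hcN
  have hqu : ∀ y, (q : B) * ((u : B) * (σ q * y)) = u * y := by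
    intro y
    calc (q : B) * ((u : B) * (σ q * y))
        = q * ((u : B) * σ q * ((u⁻¹ : Bˣ) : B)) * (u * y) := by
          simp only [mul_assoc, Units.inv_mul_cancel_left]
      _ = u * y := by rw [hq, one_mul]
  have hcross : (g * a * ((g⁻¹ : Bˣ) : B)) * (c • (g * b * q)) * u * σ (c • (g * b * q))
      = g * (a * b * u * σ b) * ((g⁻¹ : Bˣ) : B) := by
    rw [hσ_smul, hσ_mul, hσ_mul, hσg]
    simp only [smul_mul_assoc, mul_smul_comm, smul_smul, mul_assoc, Units.inv_mul_cancel_left, hqu]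
    rw [show bar c * (lam * c) = 1 by linear_combination hc, one_smul]
  rw [hNA, hNA, hfirst, hsecond, hcross, apply_units_conj_of_comm TB hTB_comm]

end

theorem stmt4_general
    {k K B : Type*} [Field k] [Field K] [Algebra k K] [Ring B]
    [Algebra K B] [Algebra k B] [IsScalarTower k K B]
    (bar : K ≃ₐ[k] K) (hbar : ∀ α, bar (bar α) = α)
    (σ : B → B)
    (hσ_mul : ∀ x y, σ (x * y) = σ y * σ x)
    (hσ_smul : ∀ (α : K) (x : B), σ (α • x) = bar α • σ x)
    (NB : B → K) (hNB1 : NB 1 = 1) (hNBmul : ∀ x y, NB (x * y) = NB x * NB y)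
    (hNBsmul : ∀ (α : K) (x : B), NB (α • x) = α ^ 3 * NB x)
    (hNBσ : ∀ x, NB (σ x) = bar (NB x))
    (sharpB : B → B)
    (hsharp₁ : ∀ x, x * sharpB x = NB x • (1 : B))
    (TB : B →ₗ[K] K) (hTB_comm : ∀ x y, TB (x * y) = TB (y * x))
    (u : Bˣ) (μ : K)
    (NA : B × B → K)
    (hNA : ∀ p : B × B,
      NA p = NB p.1 + (μ * NB p.2 + bar (μ * NB p.2)) - TB (p.1 * p.2 * (u : B) * σ p.2))
    (g : Bˣ) (lam : kˣ) (hg : (g : B) * σ (g : B) = (lam : k) • (1 : B))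
    (q : Bˣ) (hq : (q : B) * ((u : B) * σ (q : B) * ((u⁻¹ : Bˣ) : B)) = 1)
    (hNq : NB (q : B) = (bar (NB (g : B)))⁻¹ * NB (g : B)) :
    (∀ a b : B, σ a = a →
      NA ((g : B) * a * ((g⁻¹ : Bˣ) : B),
          ((lam : k)⁻¹) • (sharpB (σ (g : B)) * b * (q : B))) = NA (a, b)) ∧
    ((g : B) * 1 * ((g⁻¹ : Bˣ) : B),
        ((lam : k)⁻¹) • (sharpB (σ (g : B)) * 0 * (q : B))) = ((1 : B), (0 : B)) := by
  set l : K := algebraMap k K lam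
  have hl : l ≠ 0 := by simp [l]
  have hg' : (g : B) * σ g = l • 1 := by rw [algebraMap_smul]; exact hg
  have hν : NB g * bar (NB g) = l ^ 3 := by
    simpa [hg', hNBσ, hNBsmul, hNB1] using (hNBmul g (σ g)).symm
  have hsharp : sharpB (σ g) = (l⁻¹ * bar (NB g)) • (g : B) :=
    eq_smul_of_mul_eq_smul_one hl hg' (by rw [hsharp₁, hNBσ])
  refine ⟨fun a b _ => ?_, by simp⟩
  have hsecond : (lam : k)⁻¹ • (sharpB (σ g) * b * q)
      = (l⁻¹ * (l⁻¹ * bar (NB g))) • (g * b * q) := by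
    rw [hsharp, ← algebraMap_smul K, map_inv₀, smul_mul_assoc, smul_mul_assoc, smul_smul]
  rw [hsecond]
  refine secondTits_norm_map_eq hσ_mul hσ_smul hNB1 hNBmul hNBsmul hTB_comm hNA
    (eq_smul_inv_of_mul_eq_smul_one hg') hq ?_ ?_ a b
  · simp only [map_mul, map_inv₀, hbar, l, bar.commutes]
    field_simp
    linear_combination hν
  · rw [hNq]
    field_simp
    linear_combination (NB g * bar (NB g) + l ^ 3) * hν

/-- In the second Tits construction `A = J(B,σ,u,μ)` (underlying space
`(B,σ)₊ ⊕ B`, with norm `N (b,x) = N_B b + T_K (μ N_B x) − T_B (b x u σ(x))`), let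
`g ∈ B*` with `g σ(g) = λ ∈ k*`, `ν = N_B g`, and let `q ∈ U(B,σ_u)` with
`N_B q = ν̄⁻¹ ν`, where `σ_u = Int(u) ∘ σ`.  Then `(a,b) ↦ (g a g⁻¹, λ⁻¹ σ(g)^# b q)`
preserves the norm of `A` and fixes the identity `(1,0)`, hence is an automorphism
of `A` extending `x ↦ g x g⁻¹` on `(B,σ)₊`. -/
theorem stmt4
    {k K B : Type*} [Field k] [Field K] [Algebra k K] [Ring B]
    [Algebra K B] [Algebra k B] [IsScalarTower k K B]
    (hK2 : Module.finrank k K = 2)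
    (bar : K ≃ₐ[k] K) (hbar : ∀ α, bar (bar α) = α) (hbar_ne : ∃ α, bar α ≠ α)
    (σ : B → B)
    (hσ_add : ∀ x y, σ (x + y) = σ x + σ y)
    (hσ_mul : ∀ x y, σ (x * y) = σ y * σ x)
    (hσ_inv : ∀ x, σ (σ x) = x)
    (hσ_smul : ∀ (α : K) (x : B), σ (α • x) = bar α • σ x)
    (NB : B → K) (hNB1 : NB 1 = 1) (hNBmul : ∀ x y, NB (x * y) = NB x * NB y)
    (hNBsmul : ∀ (α : K) (x : B), NB (α • x) = α ^ 3 * NB x)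
    (hNBσ : ∀ x, NB (σ x) = bar (NB x))
    (sharpB : B → B)
    (hsharp₁ : ∀ x, x * sharpB x = NB x • (1 : B))
    (hsharp₂ : ∀ x, sharpB x * x = NB x • (1 : B))
    (TB : B →ₗ[K] K) (hTB_comm : ∀ x y, TB (x * y) = TB (y * x))
    (hTBσ : ∀ x, TB (σ x) = bar (TB x))
    (u : Bˣ) (hu : σ (u : B) = (u : B)) (μ : K) (hμ : μ ≠ 0)
    (hNu : NB (u : B) = μ * bar μ)
    (NA : B × B → K)
    (hNA : ∀ p : B × B,
      NA p = NB p.1 + (μ * NB p.2 + bar (μ * NB p.2)) - TB (p.1 * p.2 * (u : B) * σ p.2))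
    (g : Bˣ) (lam : kˣ) (hg : (g : B) * σ (g : B) = (lam : k) • (1 : B))
    (q : Bˣ) (hq : (q : B) * ((u : B) * σ (q : B) * ((u⁻¹ : Bˣ) : B)) = 1)
    (hNq : NB (q : B) = (bar (NB (g : B)))⁻¹ * NB (g : B)) :
    (∀ a b : B, σ a = a →
      NA ((g : B) * a * ((g⁻¹ : Bˣ) : B),
          ((lam : k)⁻¹) • (sharpB (σ (g : B)) * b * (q : B))) = NA (a, b)) ∧
    ((g : B) * 1 * ((g⁻¹ : Bˣ) : B),
        ((lam : k)⁻¹) • (sharpB (σ (g : B)) * 0 * (q : B))) = ((1 : B), (0 : B)) :=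
  stmt4_general bar hbar σ hσ_mul hσ_smul NB hNB1 hNBmul hNBsmul hNBσ sharpB hsharp₁ TB hTB_comm u μ
    NA hNA g lam hg q hq hNq
end

section
/- Let A = J(D,μ) be a first Tits construction Albert algebra and g, h ∈ D^* with N_D(g) = N_D(h). Then the map (x,y,z) ↦ (g x g^{-1}, g y h^{-1}, h z g^{-1}) is an automorphism of A (i.e., a norm-preserving linear bijection fixing the identity) extending the automorphism x ↦ g x g^{-1} of D_+. -/
/-- Let `A = J(D,μ) = D ⊕ D ⊕ D` be a first Tits construction Albert
algebra, with norm `N (x,y,z) = N_D x + μ N_D y + μ⁻¹ N_D z − T_D (xyz)` and identity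
`(1,0,0)`.  For `g, h ∈ D*` with `N_D g = N_D h`, the map
`(x,y,z) ↦ (g x g⁻¹, g y h⁻¹, h z g⁻¹)` is an automorphism of `A` (a norm-preserving
linear bijection fixing the identity) extending `x ↦ g x g⁻¹` on `D₊`. -/
theorem stmt5 {k D : Type*} [Field k] [Ring D] [Algebra k D] [FiniteDimensional k D]
    (ND : D → k) (TD : D →ₗ[k] k) (sharpD : D → D)
    (hND1 : ND 1 = 1) (hNDmul : ∀ x y, ND (x * y) = ND x * ND y)
    (hNDsmul : ∀ (t : k) (x : D), ND (t • x) = t ^ 3 * ND x)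
    (hadj₁ : ∀ x : D, x * sharpD x = ND x • (1 : D))
    (hadj₂ : ∀ x : D, sharpD x * x = ND x • (1 : D))
    (hTD_comm : ∀ x y : D, TD (x * y) = TD (y * x))
    (μ : k) (hμ : μ ≠ 0)
    (NA : D × D × D → k)
    (hNA : ∀ p : D × D × D,
      NA p = ND p.1 + μ * ND p.2.1 + μ⁻¹ * ND p.2.2 - TD (p.1 * p.2.1 * p.2.2))
    (g h : Dˣ) (hgh : ND (g : D) = ND (h : D)) :
    (∀ x y z : D,
      NA ((g : D) * x * ((g⁻¹ : Dˣ) : D), (g : D) * y * ((h⁻¹ : Dˣ) : D),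
          (h : D) * z * ((g⁻¹ : Dˣ) : D)) = NA (x, y, z)) ∧
    (((g : D) * 1 * ((g⁻¹ : Dˣ) : D), (g : D) * 0 * ((h⁻¹ : Dˣ) : D),
        (h : D) * 0 * ((g⁻¹ : Dˣ) : D)) = ((1 : D), (0 : D), (0 : D))) ∧
    Function.Bijective (fun p : D × D × D =>
      ((g : D) * p.1 * ((g⁻¹ : Dˣ) : D), (g : D) * p.2.1 * ((h⁻¹ : Dˣ) : D),
        (h : D) * p.2.2 * ((g⁻¹ : Dˣ) : D))) := by
  have e1 : ND (g : D) * ND ((g⁻¹ : Dˣ) : D) = 1 := by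
    rw [← hNDmul]; simp [hND1]
  have e2' : ND (h : D) * ND ((h⁻¹ : Dˣ) : D) = 1 := by
    rw [← hNDmul]; simp [hND1]
  have e2 : ND (g : D) * ND ((h⁻¹ : Dˣ) : D) = 1 := by rw [hgh]; exact e2'
  have e3 : ND (h : D) * ND ((g⁻¹ : Dˣ) : D) = 1 := by rw [← hgh]; exact e1
  refine ⟨?_, by simp, ?_⟩
  · intro x y z
    rw [hNA, hNA]
    have htr : TD ((g : D) * x * ((g⁻¹ : Dˣ) : D) * ((g : D) * y * ((h⁻¹ : Dˣ) : D)) *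
        ((h : D) * z * ((g⁻¹ : Dˣ) : D))) = TD (x * y * z) := by
      have h1 : (g : D) * x * ((g⁻¹ : Dˣ) : D) * ((g : D) * y * ((h⁻¹ : Dˣ) : D)) *
          ((h : D) * z * ((g⁻¹ : Dˣ) : D)) = (g : D) * (x * (y * z) * ((g⁻¹ : Dˣ) : D)) := by
        simp [mul_assoc]
      rw [h1, hTD_comm]
      simp [mul_assoc]
    rw [htr]
    simp only [hNDmul]
    linear_combination ND x * e1 + μ * ND y * e2 + μ⁻¹ * ND z * e3
  · refine Function.bijective_iff_has_inverse.mpr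
      ⟨fun p => (((g⁻¹ : Dˣ) : D) * p.1 * (g : D), ((g⁻¹ : Dˣ) : D) * p.2.1 * (h : D),
        ((h⁻¹ : Dˣ) : D) * p.2.2 * (g : D)), ?_, ?_⟩ <;>
      · intro p
        simp [mul_assoc]
end

section
/- Let A = J(B,σ,u,μ) be an Albert division algebra, S = (B,σ)_+, and let ψ(x) = γ g x σ(g) for γ ∈ k^*, g ∈ B^* be a norm similarity of S. Then for any q ∈ U(B,σ_u) with N_B(q) = N_B(σ(g)^{-1} g), the map ψ̃((b,x)) = γ(g b σ(g), σ(g)^# x q) satisfies N(ψ̃((b,x))) = γ^3 ν ν̄ · N((b,x)) where ν = N_B(g); hence ψ̃ is a norm similarity of A extending ψ and stabilizing S. -/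
/-- With `A = J(B,σ,u,μ)` an Albert division algebra and `S = (B,σ)₊`,
let `ψ(x) = γ g x σ(g)` (`γ ∈ k*`, `g ∈ B*`) be a norm similarity of `S`.  For any
`q ∈ U(B,σ_u)` with `N_B q = N_B (σ(g)⁻¹ g)`, the map
`ψ̃ (b,x) = γ (g b σ(g), σ(g)^# x q)` satisfies `N (ψ̃ (b,x)) = γ³ ν ν̄ · N (b,x)`
where `ν = N_B g`; hence `ψ̃` is a norm similarity of `A` extending `ψ` and
stabilizing `S`. -/
theorem stmt8
    {k K B : Type*} [Field k] [Field K] [Algebra k K] [Ring B]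
    [Algebra K B] [Algebra k B] [IsScalarTower k K B]
    (hK2 : Module.finrank k K = 2)
    (bar : K ≃ₐ[k] K) (hbar : ∀ α, bar (bar α) = α) (hbar_ne : ∃ α, bar α ≠ α)
    (σ : B → B)
    (hσ_add : ∀ x y, σ (x + y) = σ x + σ y)
    (hσ_mul : ∀ x y, σ (x * y) = σ y * σ x)
    (hσ_inv : ∀ x, σ (σ x) = x)
    (hσ_smul : ∀ (α : K) (x : B), σ (α • x) = bar α • σ x)
    (NB : B → K) (hNB1 : NB 1 = 1) (hNBmul : ∀ x y, NB (x * y) = NB x * NB y)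
    (hNBsmul : ∀ (α : K) (x : B), NB (α • x) = α ^ 3 * NB x)
    (hNBσ : ∀ x, NB (σ x) = bar (NB x))
    (sharpB : B → B)
    (hsharp₁ : ∀ x, x * sharpB x = NB x • (1 : B))
    (hsharp₂ : ∀ x, sharpB x * x = NB x • (1 : B))
    (TB : B →ₗ[K] K) (hTB_comm : ∀ x y, TB (x * y) = TB (y * x))
    (hTBσ : ∀ x, TB (σ x) = bar (TB x))
    (u : Bˣ) (hu : σ (u : B) = (u : B)) (μ : K) (hμ : μ ≠ 0)
    (hNu : NB (u : B) = μ * bar μ)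
    (NA : B × B → K)
    (hNA : ∀ p : B × B,
      NA p = NB p.1 + (μ * NB p.2 + bar (μ * NB p.2)) - TB (p.1 * p.2 * (u : B) * σ p.2))
    (hdiv : ∀ p : B × B, σ p.1 = p.1 → NA p = 0 → p = 0)
    (g : Bˣ) (γ : kˣ)
    (q : Bˣ) (hq : (q : B) * ((u : B) * σ (q : B) * ((u⁻¹ : Bˣ) : B)) = 1)
    (hNq : NB (q : B) = NB (σ ((g⁻¹ : Bˣ) : B) * (g : B))) :
    ∀ b x : B, σ b = b →
      NA ((γ : k) • ((g : B) * b * σ (g : B)),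
          (γ : k) • (sharpB (σ (g : B)) * x * (q : B))) =
        (algebraMap k K (γ : k)) ^ 3 * NB (g : B) * bar (NB (g : B)) * NA (b, x) := by
  intro b x hb
  have hσ1 : σ 1 = 1 := by
    have h := hσ_mul (σ 1) 1
    rw [mul_one, hσ_inv, mul_one] at h
    exact h.symm
  have hGGi : (g : B) * ((g⁻¹ : Bˣ) : B) = 1 := g.mul_inv
  have hGiG : ((g⁻¹ : Bˣ) : B) * (g : B) = 1 := g.inv_mul
  have hνGi : NB (g : B) * NB ((g⁻¹ : Bˣ) : B) = 1 := by
    rw [← hNBmul, hGGi, hNB1]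
  have hν_ne : NB (g : B) ≠ 0 := left_ne_zero_of_mul_eq_one hνGi
  have hbarν_ne : bar (NB (g : B)) ≠ 0 := by
    intro h
    exact hν_ne (by rw [← hbar (NB (g : B)), h, map_zero])
  have hbarGi : bar (NB (g : B)) * bar (NB ((g⁻¹ : Bˣ) : B)) = 1 := by
    rw [← map_mul, hνGi, map_one]
  have hNsharp : NB (sharpB (σ (g : B))) = bar (NB (g : B)) ^ 2 := by
    have h := congrArg NB (hsharp₁ (σ (g : B)))
    rw [hNBmul, hNBsmul, hNB1, mul_one, hNBσ] at h
    exact mul_left_cancel₀ hbarν_ne (h.trans (by ring))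
  have hσsharp : σ (sharpB (σ (g : B))) = NB (g : B) • ((g⁻¹ : Bˣ) : B) := by
    have h := congrArg σ (hsharp₂ (σ (g : B)))
    rw [hσ_mul, hσ_inv, hσ_smul, hσ1, hNBσ, hbar] at h
    have h2 := congrArg (((g⁻¹ : Bˣ) : B) * ·) h
    simpa [← mul_assoc, hGiG, mul_smul_comm] using h2
  have hquq : (q : B) * (u : B) * σ (q : B) = (u : B) := by
    have h : ((q : B) * ((u : B) * σ (q : B) * ((u⁻¹ : Bˣ) : B))) * (u : B) = (u : B) := by
      rw [hq, one_mul]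
    rw [mul_assoc, mul_assoc ((u : B) * σ (q : B)), u.inv_mul, mul_one, ← mul_assoc] at h
    exact h
  have e1 : ∀ z : B, σ (g : B) * (sharpB (σ (g : B)) * z) = bar (NB (g : B)) • z := by
    intro z
    rw [← mul_assoc, hsharp₁, hNBσ, smul_mul_assoc, one_mul]
  have e2 : ∀ z : B, (q : B) * ((u : B) * (σ (q : B) * z)) = (u : B) * z := by
    intro z
    rw [← mul_assoc, ← mul_assoc, hquq]
  have core : (g : B) * (b * (σ (g : B) * (sharpB (σ (g : B)) * (x * ((q : B) * ((u : B) * (σ (q : B) * (σ x * ((g⁻¹ : Bˣ) : B)))))))))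
      = bar (NB (g : B)) • ((g : B) * (b * (x * ((u : B) * (σ x * ((g⁻¹ : Bˣ) : B)))))) := by
    rw [e2, e1]
    simp [mul_smul_comm]
  have hσp2 : σ ((γ : k) • (sharpB (σ (g : B)) * x * (q : B)))
      = algebraMap k K (γ : k) • (σ (q : B) * (σ x * (NB (g : B) • ((g⁻¹ : Bˣ) : B)))) := by
    rw [← algebraMap_smul K (γ : k), hσ_smul, bar.commutes, hσ_mul, hσ_mul, hσsharp]
  have hTB3 : TB (((γ : k) • ((g : B) * b * σ (g : B))) * ((γ : k) • (sharpB (σ (g : B)) * x * (q : B))) * (u : B) * σ ((γ : k) • (sharpB (σ (g : B)) * x * (q : B))))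
      = algebraMap k K (γ : k) ^ 3 * (NB (g : B) * bar (NB (g : B))) * TB (b * x * (u : B) * σ x) := by
    rw [hσp2, ← algebraMap_smul K (γ : k) ((g : B) * b * σ (g : B)),
        ← algebraMap_smul K (γ : k) (sharpB (σ (g : B)) * x * (q : B))]
    simp only [smul_mul_assoc, mul_smul_comm, smul_smul, mul_assoc]
    rw [core]
    simp only [smul_smul, map_smul, smul_eq_mul]
    rw [hTB_comm, show (b * (x * ((u : B) * (σ x * ((g⁻¹ : Bˣ) : B))))) * (g : B) = b * (x * ((u : B) * σ x)) from by
      simp only [mul_assoc, hGiG, mul_one]]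
    ring
  have hN1 : NB ((γ : k) • ((g : B) * b * σ (g : B)))
      = algebraMap k K (γ : k) ^ 3 * (NB (g : B) * NB b * bar (NB (g : B))) := by
    rw [← algebraMap_smul K (γ : k), hNBsmul, hNBmul, hNBmul, hNBσ]
  have hN2 : NB ((γ : k) • (sharpB (σ (g : B)) * x * (q : B)))
      = algebraMap k K (γ : k) ^ 3 * (NB (g : B) * bar (NB (g : B)) * NB x) := by
    rw [← algebraMap_smul K (γ : k), hNBsmul, hNBmul, hNBmul, hNsharp, hNq, hNBmul, hNBσ]
    linear_combination (algebraMap k K (γ : k) ^ 3 * NB x * NB (g : B) * bar (NB (g : B))) * hbarGi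
  have hbar2 : bar (μ * (algebraMap k K (γ : k) ^ 3 * (NB (g : B) * bar (NB (g : B)) * NB x)))
      = algebraMap k K (γ : k) ^ 3 * (NB (g : B) * bar (NB (g : B))) * bar (μ * NB x) := by
    simp only [map_mul, map_pow, AlgEquiv.commutes, hbar]
    ring
  simp only [hNA]
  rw [hN1, hN2, hTB3, hbar2]
  ring
end

section
/- Let G be a connected algebraic group over an infinite field k. The set RG(k) of elements of G(k) that are R-equivalent to the identity is a normal subgroup of G(k), and the set of R-equivalence classes G(k)/R carries a group structure naturally identified with G(k)/RG(k). -/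
/-- R-equivalence on a connected algebraic group, after Manin:
Model the `k`-points of a connected algebraic group over an infinite field `k` as a
group `G`, and the rational maps `𝔸¹_k → G` defined over `k` and regular at `0` and
`1` as a class `Paths ⊆ (k → G)` containing the constant maps and closed under
reversal `t ↦ 1 − t` and under left and right translations (translations by rational
points are regular).  Two points are R-equivalent if they are joined by a chain of
such paths, i.e. related by the equivalence closure of the elementary path relation.
Then the set `RG(k)` of elements R-equivalent to `1` is a normal subgroup of `G(k)`,
and the set of R-equivalence classes `G(k)/R` is naturally identified with the group
`G(k)/RG(k)` (R-classes are exactly the cosets of `RG(k)`). -/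
theorem stmt11 {k G : Type*} [Field k] [Infinite k] [Group G]
    (Paths : Set (k → G))
    (hconst : ∀ g : G, (fun _ : k => g) ∈ Paths)
    (hrev : ∀ f ∈ Paths, (fun t : k => f (1 - t)) ∈ Paths)
    (hleft : ∀ f ∈ Paths, ∀ g : G, (fun t : k => g * f t) ∈ Paths)
    (hright : ∀ f ∈ Paths, ∀ g : G, (fun t : k => f t * g) ∈ Paths) :
    ∃ RG : Subgroup G, RG.Normal ∧
      (∀ g : G,
        g ∈ RG ↔ Relation.EqvGen (fun x y => ∃ f ∈ Paths, f 0 = x ∧ f 1 = y) g 1) ∧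
      (∀ x y : G,
        Relation.EqvGen (fun x y => ∃ f ∈ Paths, f 0 = x ∧ f 1 = y) x y ↔
          x⁻¹ * y ∈ RG) := by
  set r : G → G → Prop := fun x y => ∃ f ∈ Paths, f 0 = x ∧ f 1 = y with hr
  have hL : ∀ {x y : G}, Relation.EqvGen r x y → ∀ g : G, Relation.EqvGen r (g * x) (g * y) := by
    intro x y h
    induction h with
    | rel x y hxy =>
        intro g
        obtain ⟨f, hf, h0, h1⟩ := hxy
        exact Relation.EqvGen.rel _ _ ⟨fun t => g * f t, hleft f hf g, by simp [h0], by simp [h1]⟩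
    | refl x => intro g; exact Relation.EqvGen.refl _
    | symm x y _ ih => intro g; exact Relation.EqvGen.symm _ _ (ih g)
    | trans x y z _ _ ih1 ih2 => intro g; exact Relation.EqvGen.trans _ _ _ (ih1 g) (ih2 g)
  have hR : ∀ {x y : G}, Relation.EqvGen r x y → ∀ g : G, Relation.EqvGen r (x * g) (y * g) := by
    intro x y h
    induction h with
    | rel x y hxy =>
        intro g
        obtain ⟨f, hf, h0, h1⟩ := hxy
        exact Relation.EqvGen.rel _ _ ⟨fun t => f t * g, hright f hf g, by simp [h0], by simp [h1]⟩
    | refl x => intro g; exact Relation.EqvGen.refl _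
    | symm x y _ ih => intro g; exact Relation.EqvGen.symm _ _ (ih g)
    | trans x y z _ _ ih1 ih2 => intro g; exact Relation.EqvGen.trans _ _ _ (ih1 g) (ih2 g)
  refine ⟨{ carrier := {g | Relation.EqvGen r g 1}
            one_mem' := Relation.EqvGen.refl _
            mul_mem' := ?_
            inv_mem' := ?_ }, ?_, ?_, ?_⟩
  · intro a b ha hb
    have h1 : Relation.EqvGen r (a * b) a := by simpa using hL hb a
    exact Relation.EqvGen.trans _ _ _ h1 ha
  · intro a ha
    have := hL ha a⁻¹
    simpa using Relation.EqvGen.symm _ _ this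
  · constructor
    intro a ha g
    have h1 : Relation.EqvGen r (g * a * g⁻¹) (g * 1 * g⁻¹) := hR (hL ha g) g⁻¹
    simpa using h1
  · intro g; exact Iff.rfl
  · intro x y
    constructor
    · intro h
      have := hL h x⁻¹
      simpa using Relation.EqvGen.symm _ _ this
    · intro h
      have := hL (Relation.EqvGen.symm _ _ h) x
      simpa using this
end

section
/- Let L be a cubic field extension of k, λ ∈ k^*, and S = J(L,λ) the first Tits process on L ⊕ L ⊕ L. For a ∈ L^*, the norm similarity χ = R_{N_L(a)} ∘ U_{(0,0,1)} ∘ U_{(0, N_L(a)^{-1}a, 0)} of S satisfies χ(a) = 1, where a is viewed as (a,0,0) ∈ S. -/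
/-- Let `L/k` be a cubic field extension, `λ ∈ k*`, and
`S = J(L,λ) = L ⊕ L ⊕ L` the first Tits process, with norm
`N (x,y,z) = N_L x + λ N_L y + λ⁻¹ N_L z − T_L (xyz)`, trace form
`T((x,y,z),(x',y',z')) = T_L(xx') + T_L(yz') + T_L(zy')`, adjoint
`(x,y,z)^# = (x^# − yz, λ⁻¹ z^# − xy, λ y^# − zx)` where `x^# = N_L(x)·x⁻¹`,
and `U_v(w) = T(v,w)·v − v^# × w`.  For `a ∈ L*`, the norm similarity
`χ = R_{N_L(a)} ∘ U_{(0,0,1)} ∘ U_{(0, N_L(a)⁻¹·a, 0)}` satisfies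
`χ((a,0,0)) = (1,0,0)`. -/
theorem stmt14 {k L : Type*} [Field k] [Field L] [Algebra k L]
    [FiniteDimensional k L] (h3 : Module.finrank k L = 3)
    (lam : k) (hlam : lam ≠ 0)
    (sharpL : L → L) (hsharpL : ∀ x : L, sharpL x = (Algebra.norm k x) • x⁻¹)
    (Tf : L × L × L → L × L × L → k)
    (hTf : ∀ v w : L × L × L,
      Tf v w = Algebra.trace k L (v.1 * w.1) + Algebra.trace k L (v.2.1 * w.2.2)
        + Algebra.trace k L (v.2.2 * w.2.1))
    (sharpV : L × L × L → L × L × L)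
    (hsharpV : ∀ v : L × L × L,
      sharpV v = (sharpL v.1 - v.2.1 * v.2.2,
        lam⁻¹ • sharpL v.2.2 - v.1 * v.2.1,
        lam • sharpL v.2.1 - v.2.2 * v.1))
    (Uop : L × L × L → L × L × L → L × L × L)
    (hUop : ∀ v w : L × L × L,
      Uop v w = Tf v w • v - (sharpV (sharpV v + w) - sharpV (sharpV v) - sharpV w))
    (a : L) (ha : a ≠ 0) :
    (Algebra.norm k a) •
        Uop ((0 : L), (0 : L), (1 : L))
          (Uop ((0 : L), ((Algebra.norm k a)⁻¹ • a : L), (0 : L))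
            ((a, (0 : L), (0 : L)))) =
      ((1 : L), (0 : L), (0 : L)) := by
  set n := Algebra.norm k a with hn_def
  have hn : n ≠ 0 := by
    rw [hn_def]
    exact (Algebra.norm_ne_zero_iff).mpr ha
  have hs0 : sharpL 0 = 0 := by simp [hsharpL]
  have hs1 : sharpL 1 = 1 := by simp [hsharpL]
  have hnorm_b : Algebra.norm k (n⁻¹ • a) = n⁻¹ * n⁻¹ := by
    rw [Algebra.smul_def, map_mul, Algebra.norm_algebraMap, h3, ← hn_def]
    field_simp
  have hb : sharpL (n⁻¹ • a) = n⁻¹ • a⁻¹ := by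
    rw [hsharpL, hnorm_b, smul_inv₀, inv_inv, smul_smul]
    congr 1
    field_simp
  have h1 : Uop (0, n⁻¹ • a, 0) (a, 0, 0) = (0, 0, (lam * n⁻¹) • 1) := by
    rw [hUop]
    simp only [hsharpV, hTf, hs0, hs1, hb]
    simp [Prod.ext_iff, smul_smul, smul_mul_assoc, inv_mul_cancel₀ ha, mul_inv_cancel₀ ha, hs0, mul_comm]
  rw [h1, hUop]
  simp only [hsharpV, hTf, hs0, hs1]
  simp [Prod.ext_iff, smul_smul, mul_zero, zero_mul, hs0]
  have : n * (lam * n⁻¹ * lam⁻¹) = 1 := by field_simp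
  rw [this, one_smul]
end

section
/- Let A = J(B,σ,u,μ) be a second Tits construction Albert algebra with q ∈ U(B,σ_u), i.e., q u σ(q) u^{-1} = 1. Then q u = u σ(q)^{-1}, and the map θ_q : (b,x) ↦ (b, xq) preserves the norm of A if and only if N_B(q) ∈ K has the property that T_K(μ N_B(x) N_B(q)) = T_K(μ N_B(x)) for all x ∈ B; in particular θ_q is an automorphism of A fixing (B,σ)_+ pointwise whenever q ∈ SU(B,σ_u). -/
/-- For `A = J(B,σ,u,μ)` and `q ∈ U(B,σ_u)` (i.e. `q u σ(q) u⁻¹ = 1`),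
one has `q u = u σ(q)⁻¹` (here `σ(q)⁻¹ = σ(q⁻¹)`), and the map
`θ_q : (b,x) ↦ (b, xq)` preserves the norm of `A` iff
`T_K (μ N_B(x) N_B(q)) = T_K (μ N_B(x))` for all `x ∈ B`; in particular `θ_q` is an
automorphism of `A` fixing `(B,σ)₊` pointwise whenever `q ∈ SU(B,σ_u)`. -/
theorem stmt18
    {k K B : Type*} [Field k] [Field K] [Algebra k K] [Ring B]
    [Algebra K B] [Algebra k B] [IsScalarTower k K B]
    (hK2 : Module.finrank k K = 2)
    (bar : K ≃ₐ[k] K) (hbar : ∀ α, bar (bar α) = α) (hbar_ne : ∃ α, bar α ≠ α)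
    (σ : B → B)
    (hσ_add : ∀ x y, σ (x + y) = σ x + σ y)
    (hσ_mul : ∀ x y, σ (x * y) = σ y * σ x)
    (hσ_inv : ∀ x, σ (σ x) = x)
    (hσ_smul : ∀ (α : K) (x : B), σ (α • x) = bar α • σ x)
    (NB : B → K) (hNB1 : NB 1 = 1) (hNBmul : ∀ x y, NB (x * y) = NB x * NB y)
    (hNBsmul : ∀ (α : K) (x : B), NB (α • x) = α ^ 3 * NB x)
    (hNBσ : ∀ x, NB (σ x) = bar (NB x))
    (sharpB : B → B)
    (hsharp₁ : ∀ x, x * sharpB x = NB x • (1 : B))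
    (hsharp₂ : ∀ x, sharpB x * x = NB x • (1 : B))
    (TB : B →ₗ[K] K) (hTB_comm : ∀ x y, TB (x * y) = TB (y * x))
    (hTBσ : ∀ x, TB (σ x) = bar (TB x))
    (u : Bˣ) (hu : σ (u : B) = (u : B)) (μ : K) (hμ : μ ≠ 0)
    (hNu : NB (u : B) = μ * bar μ)
    (NA : B × B → K)
    (hNA : ∀ p : B × B,
      NA p = NB p.1 + (μ * NB p.2 + bar (μ * NB p.2)) - TB (p.1 * p.2 * (u : B) * σ p.2))
    (q : Bˣ) (hq : (q : B) * ((u : B) * σ (q : B) * ((u⁻¹ : Bˣ) : B)) = 1) :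
    ((q : B) * (u : B) = (u : B) * σ ((q⁻¹ : Bˣ) : B)) ∧
    ((∀ p : B × B, σ p.1 = p.1 → NA (p.1, p.2 * (q : B)) = NA p) ↔
      (∀ x : B, μ * NB x * NB (q : B) + bar (μ * NB x * NB (q : B)) =
        μ * NB x + bar (μ * NB x))) ∧
    (NB (q : B) = 1 →
      (∀ p : B × B, σ p.1 = p.1 → NA (p.1, p.2 * (q : B)) = NA p) ∧
      ∀ b : B, σ b = b → ((b, (0 : B) * (q : B)) : B × B) = (b, 0)) := by

  -- basic facts
  have hσ1 : σ (1 : B) = 1 := by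
    have h1 : ∀ x, σ x = σ (1 : B) * σ x := fun x => by
      conv_lhs => rw [show x = x * 1 from (mul_one x).symm, hσ_mul]
    have := h1 (σ 1)
    rw [hσ_inv] at this
    rw [mul_one] at this
    exact this.symm
  have hσ0 : σ (0 : B) = 0 := by
    have := hσ_add 0 0
    rw [add_zero] at this
    nth_rewrite 1 [← add_zero (σ 0)] at this
    exact (add_left_cancel this).symm
  have hquσ : (q : B) * (u : B) * σ (q : B) = (u : B) := by
    have h1 : ((q : B) * (u : B) * σ (q : B)) * ((u⁻¹ : Bˣ) : B) = 1 := by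
      rw [← hq]; simp [mul_assoc]
    calc (q : B) * (u : B) * σ (q : B)
        = ((q : B) * (u : B) * σ (q : B)) * (((u⁻¹ : Bˣ) : B) * (u : B)) := by
          rw [Units.inv_mul, mul_one]
      _ = (((q : B) * (u : B) * σ (q : B)) * ((u⁻¹ : Bˣ) : B)) * (u : B) := by
          simp [mul_assoc]
      _ = (u : B) := by rw [h1, one_mul]
  have hqinv : σ (q : B) * σ ((q⁻¹ : Bˣ) : B) = 1 := by
    rw [← hσ_mul, Units.inv_mul, hσ1]
  have part1 : (q : B) * (u : B) = (u : B) * σ ((q⁻¹ : Bˣ) : B) := by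
    calc (q : B) * (u : B)
        = (q : B) * (u : B) * (σ (q : B) * σ ((q⁻¹ : Bˣ) : B)) := by
          rw [hqinv, mul_one]
      _ = ((q : B) * (u : B) * σ (q : B)) * σ ((q⁻¹ : Bˣ) : B) := by simp [mul_assoc]
      _ = (u : B) * σ ((q⁻¹ : Bˣ) : B) := by rw [hquσ]
  have hkey : ∀ p1 p2 : B,
      p1 * (p2 * (q : B)) * (u : B) * σ (p2 * (q : B)) = p1 * p2 * (u : B) * σ p2 := by
    intro p1 p2
    rw [hσ_mul]
    calc p1 * (p2 * (q : B)) * (u : B) * (σ (q : B) * σ p2)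
        = p1 * p2 * ((q : B) * (u : B) * σ (q : B)) * σ p2 := by
          simp [mul_assoc]
      _ = p1 * p2 * (u : B) * σ p2 := by rw [hquσ]
  have hNB0 : NB (0 : B) = 0 := by
    have := hNBsmul 0 1
    simpa using this
  have iff2 : (∀ p : B × B, σ p.1 = p.1 → NA (p.1, p.2 * (q : B)) = NA p) ↔
      (∀ x : B, μ * NB x * NB (q : B) + bar (μ * NB x * NB (q : B)) =
        μ * NB x + bar (μ * NB x)) := by
    constructor
    · intro h x
      have := h (0, x) hσ0
      rw [hNA, hNA] at this
      simp only [hNB0, zero_mul, map_zero, zero_add, sub_zero] at this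
      rwa [hNBmul, ← mul_assoc] at this
    · intro h p hp
      rw [hNA, hNA]
      simp only
      rw [hkey, hNBmul, ← mul_assoc, h p.2]
  refine ⟨part1, iff2, fun hNq => ⟨iff2.mpr fun x => by rw [hNq, mul_one], ?_⟩⟩
  intro b hb
  rw [zero_mul]
end
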